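/- Every non-cyclic proper subgroup of T'_{8·3^q} is conjugate to ⟨b, a, w^{3^r}⟩ ≅ Q₈ × Z/3^{q-r} for some 0 < r ≤ q. -/

import Mathlib

/-- Relations of the generalized binary tetrahedral group
`T'_{8·3^q} = ⟨b, a, w | a² = b² = (ab)², a⁴ = w^{3^q} = 1, wa = bw, wb = abw⟩`,
with `b` the letter `0`, `a` the letter `1` and `w` the letter `2`. -/
def TprimeRels (q : ℕ) : Set (FreeGroup (Fin 3)) :=
  { (FreeGroup.of 1) ^ 2 * ((FreeGroup.of 0) ^ 2)⁻¹,
    (FreeGroup.of 1) ^ 2 * ((FreeGroup.of 1 * FreeGroup.of 0) ^ 2)⁻¹,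
    (FreeGroup.of 1) ^ 4,
    (FreeGroup.of 2) ^ (3 ^ q),
    (FreeGroup.of 2 * FreeGroup.of 1) * (FreeGroup.of 0 * FreeGroup.of 2)⁻¹,
    (FreeGroup.of 2 * FreeGroup.of 0) *
      (FreeGroup.of 1 * FreeGroup.of 0 * FreeGroup.of 2)⁻¹ }

/-- The generalized binary tetrahedral group `T'_{8·3^q}`. -/
abbrev Tprime (q : ℕ) := PresentedGroup (TprimeRels q)

/-- The generator `b` of `T'_{8·3^q}`. -/
def Tprime.b (q : ℕ) : Tprime q := PresentedGroup.of 0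

/-- The generator `a` of `T'_{8·3^q}`. -/
def Tprime.a (q : ℕ) : Tprime q := PresentedGroup.of 1

/-- The generator `w` of `T'_{8·3^q}`. -/
def Tprime.w (q : ℕ) : Tprime q := PresentedGroup.of 2

/-!
`T'_{8·3^q}` is the semidirect product `Q₈ ⋊ C_{3^q}`, where `⟨b, a⟩ ≅ Q₈` and `w` generates
`C_{3^q}`, acting on `Q₈` by the automorphism of order 3 that cycles `i, j, k`; the isomorphism
is given by two mutually inverse homomorphisms.

Let `H` be a subgroup. If `H ⊉ Q₈`, then `K = H ∩ Q₈` is a proper, hence cyclic, subgroup of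
`Q₈`, and `H / K` embeds into `C_{3^q}`. A 3-group acts trivially on `K` because `|Aut K|`
divides `φ(8) = 4`, so `K` is central in `H`, and `H`, a central extension of a cyclic group
by a cyclic group of coprime order, is cyclic. If `H ⊇ Q₈`, then `H` is the full preimage of
its image `⟨w^{3^r}⟩` in `C_{3^q}`, with `r > 0` as `H` is proper; `w^{3^r}` acts trivially on
`Q₈`, so `H ≅ Q₈ × C_{3^{q-r}}`. Such an `H` is normal, so the conjugating element can be `1`.
-/

open QuaternionGroup SemidirectProduct Multiplicative Subgroup

noncomputable section

section ZModPow

variable {G : Type*} [Group G] {n : ℕ}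

theorem ofAdd_intCast_eq_zpow (k : ℤ) :
    ofAdd (k : ZMod n) = (ofAdd 1 : Multiplicative (ZMod n)) ^ k := by
  rw [← ofAdd_zsmul, zsmul_one]

theorem ofAdd_natCast_eq_pow (k : ℕ) :
    ofAdd (k : ZMod n) = (ofAdd 1 : Multiplicative (ZMod n)) ^ k := by
  rw [← ofAdd_nsmul, nsmul_one]

theorem mem_zpowers_ofAdd_one (c : Multiplicative (ZMod n)) : c ∈ zpowers (ofAdd 1) :=
  mem_zpowers_iff.mpr
    ⟨(toAdd c).cast, by rw [← ofAdd_intCast_eq_zpow, ZMod.intCast_zmod_cast, ofAdd_toAdd]⟩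

theorem orderOf_ofAdd_one : orderOf (ofAdd (1 : ZMod n)) = n := by
  rw [orderOf_ofAdd_eq_addOrderOf, ZMod.addOrderOf_one]

theorem orderOf_ofAdd_one_pow_pow {p q r : ℕ} (hp : p ≠ 0) (hr : r ≤ q) :
    orderOf ((ofAdd (1 : ZMod (p ^ q))) ^ p ^ r) = p ^ (q - r) := by
  rw [orderOf_pow_of_dvd (pow_ne_zero _ hp) (by rw [orderOf_ofAdd_one]; exact pow_dvd_pow p hr),
    orderOf_ofAdd_one, Nat.pow_div hr (Nat.pos_of_ne_zero hp)]

theorem Nat.card_multiplicative_zmod (n : ℕ) : Nat.card (Multiplicative (ZMod n)) = n :=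
  (Nat.card_congr toAdd).trans (Nat.card_zmod n)

def zmodPowHom (x : G) (hx : x ^ n = 1) : Multiplicative (ZMod n) →* G :=
  monoidHomOfForallMemZpowers mem_zpowers_ofAdd_one
    (by rw [orderOf_ofAdd_one]; exact orderOf_dvd_of_pow_eq_one hx)

variable {x : G} (hx : x ^ n = 1)

@[simp]
theorem zmodPowHom_ofAdd_one : zmodPowHom x hx (ofAdd 1) = x :=
  monoidHomOfForallMemZpowers_apply_gen _ _

@[simp]
theorem zmodPowHom_ofAdd_natCast (k : ℕ) : zmodPowHom x hx (ofAdd k) = x ^ k := by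
  rw [ofAdd_natCast_eq_pow, map_pow, zmodPowHom_ofAdd_one]

@[simp]
theorem zmodPowHom_ofAdd_intCast (k : ℤ) : zmodPowHom x hx (ofAdd k) = x ^ k := by
  rw [ofAdd_intCast_eq_zpow, map_zpow, zmodPowHom_ofAdd_one]

end ZModPow

section Cyclic

variable {G : Type*} [Group G]

theorem Subgroup.le_center_of_forall_pow_mem (K : Subgroup G) [K.Normal] [Finite K] [IsCyclic K]
    {n : ℕ} (hn : ∀ g : G, g ^ n ∈ K) (hcop : n.Coprime (Nat.card K).totient) :
    K ≤ center G := by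
  intro k hk
  rw [mem_center_iff]
  intro g
  have hσn : MulAut.conjNormal (H := K) g ^ n = 1 := by
    ext x
    rw [← map_pow, MulAut.conjNormal_apply, MulAut.one_apply, mul_inv_eq_iff_eq_mul]
    exact congrArg Subtype.val (IsCyclic.isMulCommutative.is_comm.comm ⟨g ^ n, hn g⟩ x)
  have hσ : MulAut.conjNormal (H := K) g = 1 := by
    rw [← orderOf_eq_one_iff]
    refine Nat.eq_one_of_dvd_coprimes hcop (orderOf_dvd_of_pow_eq_one hσn) ?_
    rw [← IsCyclic.card_mulAut]
    exact _root_.orderOf_dvd_natCard _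
  have h := congrArg Subtype.val (DFunLike.congr_fun hσ ⟨k, hk⟩)
  rwa [MulAut.conjNormal_apply, MulAut.one_apply, mul_inv_eq_iff_eq_mul] at h

theorem MonoidHom.isCyclic_of_ker_le_center {H : Type*} [Group H] (f : G →* H)
    (hf : f.ker ≤ center G) [IsCyclic f.ker] [IsCyclic f.range]
    (hcop : (Nat.card f.ker).Coprime (Nat.card f.range)) : IsCyclic G := by
  let _ := commGroupOfCyclicCenterQuotient f.rangeRestrict (by rwa [ker_rangeRestrict])
  exact Group.isCyclic_of_coprime_card_range_card_ker f hcop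

theorem IsCyclic.eq_ker_powMonoidHom_card {C : Type*} [CommGroup C] [Finite C] [IsCyclic C]
    (S : Subgroup C) : S = (powMonoidHom (Nat.card S) : C →* C).ker := by
  refine eq_of_le_of_card_ge (fun x hx => ?_) ?_
  · rw [MonoidHom.mem_ker, powMonoidHom_apply]
    exact congrArg Subtype.val (pow_card_eq_one' (x := (⟨x, hx⟩ : S)))
  · rw [IsCyclic.card_powMonoidHom_ker, Nat.gcd_eq_right (card_subgroup_dvd_card S)]

theorem IsCyclic.subgroup_eq_of_card_eq {C : Type*} [CommGroup C] [Finite C] [IsCyclic C]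
    {S T : Subgroup C} (h : Nat.card S = Nat.card T) : S = T := by
  rw [eq_ker_powMonoidHom_card S, eq_ker_powMonoidHom_card T, h]

theorem exists_eq_zpowers_ofAdd_one_pow_pow {p q : ℕ} (hp : p.Prime)
    (S : Subgroup (Multiplicative (ZMod (p ^ q)))) :
    ∃ r ≤ q, S = zpowers ((ofAdd 1) ^ p ^ r) := by
  have : NeZero p := ⟨hp.ne_zero⟩
  have hS : Nat.card S ∣ p ^ q := by
    simpa only [Nat.card_multiplicative_zmod] using card_subgroup_dvd_card S
  obtain ⟨m, hm, hcard⟩ := (Nat.dvd_prime_pow hp).mp hS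
  refine ⟨q - m, Nat.sub_le q m, IsCyclic.subgroup_eq_of_card_eq ?_⟩
  rw [hcard, Nat.card_zpowers, orderOf_ofAdd_one_pow_pow hp.ne_zero (Nat.sub_le q m),
    Nat.sub_sub_self hm]

theorem MonoidHom.map_mulAut_pow_apply {N : Type*} [Group N] (f : N →* G) {σ : MulAut N} {g : G}
    (hσ : ∀ v, f (σ v) = g * f v * g⁻¹) (k : ℕ) (v : N) :
    f ((σ ^ k) v) = g ^ k * f v * (g ^ k)⁻¹ := by
  induction k generalizing v with
  | zero => simp
  | succ k ih => rw [pow_succ, MulAut.mul_apply, ih, hσ, pow_succ]; group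

end Cyclic

namespace SemidirectProduct

variable {N G : Type*} [Group N] [Group G] {φ : G →* MulAut N}

theorem inl_left_of_right_eq_one {x : N ⋊[φ] G} (hx : x.right = 1) : inl x.left = x := by
  ext <;> simp [hx]

def comapInlMulEquivKer (H : Subgroup (N ⋊[φ] G)) :
    H.comap inl ≃* (rightHom.comp H.subtype).ker where
  toFun x := ⟨⟨inl x, x.2⟩, by simp⟩
  invFun y := ⟨y.1.1.left, by
    rw [mem_comap, inl_left_of_right_eq_one (show y.1.1.right = 1 from y.2)]
    exact y.1.2⟩
  left_inv x := rfl
  right_inv y :=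
    Subtype.ext (Subtype.ext (inl_left_of_right_eq_one (show y.1.1.right = 1 from y.2)))
  map_mul' x y := Subtype.ext (Subtype.ext (map_mul inl (x : N) y))

def comapRightHomMulEquivProd {S : Subgroup G} (hS : S ≤ φ.ker) :
    S.comap (rightHom : N ⋊[φ] G →* G) ≃* N × S where
  toFun x := (x.1.left, ⟨x.1.right, x.2⟩)
  invFun p := ⟨⟨p.1, p.2⟩, p.2.2⟩
  left_inv x := rfl
  right_inv p := rfl
  map_mul' x y := by
    have hx : φ x.1.right = 1 := hS x.2
    ext <;> simp [hx]

theorem comap_rightHom_zpowers_eq_closure {s : Set N} (hs : closure s = ⊤) (g : G) :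
    (zpowers g).comap (rightHom : N ⋊[φ] G →* G) =
      closure (inl '' s ∪ {inr g} : Set (N ⋊[φ] G)) := by
  refine le_antisymm (fun x hx => ?_) (closure_le _ |>.mpr ?_)
  · obtain ⟨k, hk⟩ := mem_zpowers_iff.mp hx
    rw [← inl_left_mul_inr_right x]
    refine mul_mem ?_ ?_
    · have : inl x.left ∈ Subgroup.map (inl : N →* N ⋊[φ] G) (Subgroup.closure s) :=
        ⟨x.left, hs ▸ mem_top _, rfl⟩
      rw [MonoidHom.map_closure] at this
      exact Subgroup.closure_mono Set.subset_union_left this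
    · rw [← rightHom_eq_right, ← hk, map_zpow]
      exact zpow_mem (Subgroup.subset_closure (Set.mem_union_right _ (Set.mem_singleton _))) k
  · rintro _ (⟨v, -, rfl⟩ | rfl) <;> simp [mem_zpowers]

end SemidirectProduct

namespace QuaternionGroup

section Lift

variable {G : Type*} [Group G] {n : ℕ} {x y : G}

def lift (hx : x ^ (2 * n) = 1) (hy : y ^ 2 = x ^ n) (hyx : y⁻¹ * x * y = x⁻¹) :
    QuaternionGroup n →* G where
  toFun
    | a i => zmodPowHom x hx (ofAdd i)
    | xa i => y * zmodPowHom x hx (ofAdd i)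
  map_one' := map_one (zmodPowHom x hx)
  map_mul' := by
    have hcomm (k : ℤ) : x ^ k * y = y * x ^ (-k) := by
      have h := conj_zpow (a := y⁻¹) (b := x) (i := k)
      rw [inv_inv, hyx] at h
      rw [zpow_neg, ← inv_zpow, h]
      group
    rintro (i | i) (j | j) <;>
      obtain ⟨k, rfl⟩ := ZMod.intCast_surjective i <;>
      obtain ⟨l, rfl⟩ := ZMod.intCast_surjective j
    · simp only [a_mul_a, ← Int.cast_add, zmodPowHom_ofAdd_intCast, zpow_add]
    · simp only [a_mul_xa, ← Int.cast_sub, zmodPowHom_ofAdd_intCast]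
      rw [← mul_assoc, hcomm]
      group
    · simp only [xa_mul_a, ← Int.cast_add, zmodPowHom_ofAdd_intCast, zpow_add, mul_assoc]
    · rw [xa_mul_xa, show (n : ZMod (2 * n)) + l - k = ((n + l - k : ℤ) : ZMod (2 * n)) by
        push_cast; ring]
      simp only [zmodPowHom_ofAdd_intCast]
      rw [show y * x ^ k * (y * x ^ l) = y * (x ^ k * y) * x ^ l by group, hcomm,
        ← mul_assoc, ← sq, hy]
      group

variable (hx : x ^ (2 * n) = 1) (hy : y ^ 2 = x ^ n) (hyx : y⁻¹ * x * y = x⁻¹)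

@[simp]
theorem lift_a (i : ZMod (2 * n)) : lift hx hy hyx (a i) = zmodPowHom x hx (ofAdd i) := rfl

@[simp]
theorem lift_xa (i : ZMod (2 * n)) : lift hx hy hyx (xa i) = y * zmodPowHom x hx (ofAdd i) := rfl

end Lift

theorem closure_xa_zero_a_one {n : ℕ} [NeZero n] :
    closure {xa 0, a 1} = (⊤ : Subgroup (QuaternionGroup n)) := by
  have ha (i : ZMod (2 * n)) : a i ∈ closure {xa 0, a 1} := by
    rw [← ZMod.natCast_zmod_val i, ← a_one_pow]
    exact pow_mem (subset_closure (by simp)) _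
  refine eq_top_iff.mpr fun x _ => ?_
  rcases x with i | i
  · exact ha i
  · rw [← zero_add i, ← xa_mul_a]
    exact mul_mem (subset_closure (by simp)) (ha i)

/-- Cycles `i = a 1 ↦ j = xa 0 ↦ k = xa 3 ↦ i`. -/
def ijkCycleFun : QuaternionGroup 2 → QuaternionGroup 2
  | a i => ![a 0, xa 0, a 2, xa 2] i
  | xa i => ![xa 3, a 3, xa 1, a 1] i

theorem ijkCycleFun_apply_apply_apply (x : QuaternionGroup 2) :
    ijkCycleFun (ijkCycleFun (ijkCycleFun x)) = x := by
  revert x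
  decide

def ijkCycle : MulAut (QuaternionGroup 2) where
  toFun := ijkCycleFun
  invFun := ijkCycleFun ∘ ijkCycleFun
  left_inv := ijkCycleFun_apply_apply_apply
  right_inv := ijkCycleFun_apply_apply_apply
  map_mul' := by decide

theorem ijkCycle_pow_three : ijkCycle ^ 3 = 1 := by
  ext x
  exact ijkCycleFun_apply_apply_apply x

theorem ijkCycle_pow_three_pow {k : ℕ} (hk : 1 ≤ k) : ijkCycle ^ 3 ^ k = 1 := by
  rw [← Nat.sub_add_cancel hk, pow_succ', pow_mul, ijkCycle_pow_three, one_pow]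

theorem natCard_eq_eight : Nat.card (QuaternionGroup 2) = 8 := by
  rw [Nat.card_eq_fintype_card, QuaternionGroup.card]

theorem eq_one_or_eq_a_two_of_sq_eq_one :
    ∀ x : QuaternionGroup 2, x ^ 2 = 1 → x = 1 ∨ x = a 2 := by
  decide

theorem isCyclic_of_ne_top {S : Subgroup (QuaternionGroup 2)} (hS : S ≠ ⊤) : IsCyclic S := by
  by_cases hle : S ≤ zpowers (a 2)
  · exact isCyclic_of_le hle
  obtain ⟨x, hxS, hx⟩ := SetLike.not_le_iff_exists.mp hle
  have hx4 : orderOf x = 4 := by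
    have hexp : ∀ y : QuaternionGroup 2, y ^ 2 ^ 2 = 1 := by decide
    refine orderOf_eq_prime_pow (p := 2) (n := 1) (fun h => hx ?_) (hexp x)
    rcases eq_one_or_eq_a_two_of_sq_eq_one x h with rfl | rfl
    exacts [one_mem _, mem_zpowers _]
  have h4 : 4 ∣ Nat.card S := hx4 ▸ S.orderOf_dvd_natCard hxS
  have h8 : Nat.card S ∣ 8 := natCard_eq_eight ▸ card_subgroup_dvd_card S
  have hne : Nat.card S ≠ 8 := fun h => hS (eq_top_of_card_eq S (h.trans natCard_eq_eight.symm))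
  have hcard : Nat.card S ≤ Nat.card (zpowers x) := by
    rw [Nat.card_zpowers, hx4]
    obtain ⟨k, hk⟩ := h4
    have := Nat.le_of_dvd (by norm_num) h8
    omega
  rw [← eq_of_le_of_card_ge (zpowers_le.mpr hxS) hcard]
  infer_instance

end QuaternionGroup

namespace Tprime

variable {q : ℕ}

theorem a_pow_four : Tprime.a q ^ 4 = 1 :=
  PresentedGroup.one_of_mem (x := FreeGroup.of 1 ^ 4) (by simp [TprimeRels])

theorem a_sq_eq_b_sq : Tprime.a q ^ 2 = Tprime.b q ^ 2 :=
  mul_inv_eq_one.mp <| PresentedGroup.one_of_mem (by simp [TprimeRels])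

theorem a_sq_eq_mul_sq : Tprime.a q ^ 2 = (Tprime.a q * Tprime.b q) ^ 2 :=
  mul_inv_eq_one.mp <| PresentedGroup.one_of_mem (by simp [TprimeRels])

theorem w_pow : Tprime.w q ^ 3 ^ q = 1 :=
  PresentedGroup.one_of_mem (x := FreeGroup.of 2 ^ 3 ^ q) (by simp [TprimeRels])

theorem w_mul_a : Tprime.w q * Tprime.a q = Tprime.b q * Tprime.w q :=
  mul_inv_eq_one.mp <| PresentedGroup.one_of_mem (by simp [TprimeRels])

theorem w_mul_b : Tprime.w q * Tprime.b q = Tprime.a q * Tprime.b q * Tprime.w q :=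
  mul_inv_eq_one.mp <| PresentedGroup.one_of_mem (by simp [TprimeRels])

theorem b_inv_mul_a_mul_b : (Tprime.b q)⁻¹ * Tprime.a q * Tprime.b q = (Tprime.a q)⁻¹ := by
  have hbab : Tprime.b q * Tprime.a q * Tprime.b q = Tprime.a q := by
    refine (mul_left_cancel (a := Tprime.a q) ?_).symm
    calc Tprime.a q * Tprime.a q = (Tprime.a q * Tprime.b q) ^ 2 := by rw [← sq, a_sq_eq_mul_sq]
      _ = _ := by rw [sq]; group
  calc (Tprime.b q)⁻¹ * Tprime.a q * Tprime.b q
      = (Tprime.b q)⁻¹ * (Tprime.b q * Tprime.a q * Tprime.b q) * Tprime.b q := by rw [hbab]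
    _ = Tprime.a q * Tprime.b q ^ 2 := by rw [sq]; group
    _ = (Tprime.a q)⁻¹ := by
      rw [← a_sq_eq_b_sq, eq_inv_iff_mul_eq_one, ← pow_succ', ← pow_succ, a_pow_four]

def quaternionHom : QuaternionGroup 2 →* Tprime q :=
  QuaternionGroup.lift a_pow_four a_sq_eq_b_sq.symm b_inv_mul_a_mul_b

@[simp]
theorem quaternionHom_xa_zero : quaternionHom (xa 0) = Tprime.b q := by
  simp [quaternionHom]

@[simp]
theorem quaternionHom_a_one : quaternionHom (QuaternionGroup.a 1) = Tprime.a q := by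
  simp [quaternionHom]

theorem quaternionHom_ijkCycle (v : QuaternionGroup 2) :
    quaternionHom (ijkCycle v) = Tprime.w q * quaternionHom v * (Tprime.w q)⁻¹ := by
  refine DFunLike.congr_fun (MonoidHom.eq_of_eqOn_dense closure_xa_zero_a_one
    (f := quaternionHom.comp ijkCycle.toMonoidHom)
    (g := (MulAut.conj (Tprime.w q)).toMonoidHom.comp quaternionHom) ?_) v
  rintro _ (rfl | rfl) <;>
    simp only [MonoidHom.comp_apply, MulEquiv.coe_toMonoidHom, MulAut.conj_apply]
  · rw [show ijkCycle (xa 0) = QuaternionGroup.a 1 * xa 0 from rfl, map_mul, quaternionHom_a_one,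
      quaternionHom_xa_zero, w_mul_b, mul_inv_cancel_right]
  · rw [show ijkCycle (QuaternionGroup.a 1) = xa 0 from rfl, quaternionHom_a_one,
      quaternionHom_xa_zero, w_mul_a, mul_inv_cancel_right]

section Model

variable (hq : 1 ≤ q)

def action : Multiplicative (ZMod (3 ^ q)) →* MulAut (QuaternionGroup 2) :=
  zmodPowHom ijkCycle (ijkCycle_pow_three_pow hq)

abbrev Model := QuaternionGroup 2 ⋊[action hq] Multiplicative (ZMod (3 ^ q))

theorem inr_ofAdd_one_mul_inl (n : QuaternionGroup 2) :
    (inr (ofAdd 1) * inl n : Model hq) = inl (ijkCycle n) * inr (ofAdd 1) := by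
  have h : action hq (ofAdd 1) = ijkCycle := zmodPowHom_ofAdd_one _
  rw [← h, inl_aut, map_inv, inv_mul_cancel_right]

def toModel : Tprime q →* Model hq :=
  PresentedGroup.toGroup (f := ![inl (xa 0), inl (QuaternionGroup.a 1), inr (ofAdd 1)]) <| by
    intro r hr
    simp only [TprimeRels, Set.mem_insert_iff, Set.mem_singleton_iff] at hr
    rcases hr with rfl | rfl | rfl | rfl | rfl | rfl <;> simp only [map_mul, map_inv, map_pow,
      FreeGroup.lift_apply_of, Matrix.cons_val, mul_inv_eq_one]
    · rw [← map_pow, ← map_pow]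
      exact congrArg inl (by decide)
    · rw [← map_mul, ← map_pow, ← map_pow]
      exact congrArg inl (by decide)
    · rw [← map_pow, show (QuaternionGroup.a 1 : QuaternionGroup 2) ^ 4 = 1 by decide, map_one]
    · rw [← map_pow, ← ofAdd_natCast_eq_pow, ZMod.natCast_self, ofAdd_zero, map_one]
    · rw [inr_ofAdd_one_mul_inl]
      rfl
    · rw [inr_ofAdd_one_mul_inl, ← map_mul]
      rfl

@[simp]
theorem toModel_b : toModel hq (Tprime.b q) = inl (xa 0) := PresentedGroup.toGroup.of _

@[simp]
theorem toModel_a : toModel hq (Tprime.a q) = inl (QuaternionGroup.a 1) :=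
  PresentedGroup.toGroup.of _

@[simp]
theorem toModel_w : toModel hq (Tprime.w q) = inr (ofAdd 1) := PresentedGroup.toGroup.of _

def ofModel : Model hq →* Tprime q :=
  SemidirectProduct.lift quaternionHom (zmodPowHom (Tprime.w q) w_pow) <| by
    intro g
    ext v
    obtain ⟨k, rfl⟩ : ∃ k : ℕ, g = ofAdd (k : ZMod (3 ^ q)) := ⟨(toAdd g).val, by simp⟩
    simp only [action, zmodPowHom_ofAdd_natCast, MonoidHom.comp_apply, MulEquiv.coe_toMonoidHom,
      MulAut.conj_apply]
    exact quaternionHom.map_mulAut_pow_apply quaternionHom_ijkCycle k v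

theorem ofModel_comp_toModel : (ofModel hq).comp (toModel hq) = MonoidHom.id _ := by
  refine PresentedGroup.ext fun i => ?_
  fin_cases i
  · show ofModel hq (toModel hq (Tprime.b q)) = Tprime.b q
    simp [ofModel]
  · show ofModel hq (toModel hq (Tprime.a q)) = Tprime.a q
    simp [ofModel]
  · show ofModel hq (toModel hq (Tprime.w q)) = Tprime.w q
    simp [ofModel]

theorem toModel_comp_ofModel : (toModel hq).comp (ofModel hq) = MonoidHom.id _ := by
  refine hom_ext (MonoidHom.eq_of_eqOn_dense closure_xa_zero_a_one ?_)
    ((MonoidHom.eq_iff_eq_on_generator mem_zpowers_ofAdd_one _ _).mpr (by simp [ofModel]))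
  rintro _ (rfl | rfl) <;> simp [ofModel]

def mulEquivModel : Tprime q ≃* Model hq :=
  (toModel hq).toMulEquiv (ofModel hq) (ofModel_comp_toModel hq) (toModel_comp_ofModel hq)

@[simp]
theorem mulEquivModel_apply (x : Tprime q) : mulEquivModel hq x = toModel hq x := rfl

theorem map_mulEquivModel_closure (r : ℕ) :
    (closure {Tprime.b q, Tprime.a q, Tprime.w q ^ 3 ^ r}).map (mulEquivModel hq).toMonoidHom =
      (zpowers ((ofAdd 1) ^ 3 ^ r)).comap (rightHom : Model hq →* _) := by
  rw [MonoidHom.map_closure, comap_rightHom_zpowers_eq_closure closure_xa_zero_a_one,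
    Set.image_pair, Set.insert_union, Set.singleton_union]
  simp only [Set.image_insert_eq, Set.image_singleton, MulEquiv.coe_toMonoidHom,
    mulEquivModel_apply, toModel_b, toModel_a, toModel_w, map_pow]

theorem isCyclic_of_not_range_inl_le {H : Subgroup (Model hq)}
    (hH : ¬ (inl : QuaternionGroup 2 →* Model hq).range ≤ H) : IsCyclic H := by
  set f := (rightHom : Model hq →* _).comp H.subtype
  have e := comapInlMulEquivKer H
  have hK : H.comap inl ≠ ⊤ := fun h => hH <| by
    rintro _ ⟨v, rfl⟩
    exact (h ▸ mem_top v : v ∈ H.comap inl)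
  have : IsCyclic (H.comap inl) := isCyclic_of_ne_top hK
  have : IsCyclic f.ker := e.isCyclic.mp this
  have : Finite f.ker := Finite.of_equiv _ e.toEquiv
  have hker : Nat.card f.ker ∣ 8 :=
    Nat.card_congr e.toEquiv ▸ natCard_eq_eight ▸ card_subgroup_dvd_card (H.comap inl)
  have hrange : Nat.card f.range ∣ 3 ^ q := by
    simpa only [Nat.card_multiplicative_zmod] using card_subgroup_dvd_card f.range
  have hcop : Nat.Coprime 8 (3 ^ q) := Nat.Coprime.pow_right _ (by norm_num)
  refine f.isCyclic_of_ker_le_center ?_ ((hcop.coprime_dvd_left hker).coprime_dvd_right hrange)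
  refine f.ker.le_center_of_forall_pow_mem (n := 3 ^ q) (fun h => ?_) ?_
  · rw [MonoidHom.mem_ker, map_pow]
    simpa only [Nat.card_multiplicative_zmod] using pow_card_eq_one' (x := f h)
  · have h4 : (Nat.card f.ker).totient ∣ 4 := Nat.totient_dvd_of_dvd hker
    exact (Nat.Coprime.pow_left q (by norm_num : Nat.Coprime 3 4)).coprime_dvd_right h4

theorem exists_eq_comap_zpowers_of_range_inl_le {H : Subgroup (Model hq)}
    (hH : (inl : QuaternionGroup 2 →* Model hq).range ≤ H) (htop : H ≠ ⊤) :
    ∃ r, 0 < r ∧ r ≤ q ∧ H = (zpowers ((ofAdd 1) ^ 3 ^ r)).comap rightHom := by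
  have hHS : H = (H.map rightHom).comap rightHom :=
    (comap_map_eq_self (by rwa [← range_inl_eq_ker_rightHom])).symm
  obtain ⟨r, hrq, hS⟩ := exists_eq_zpowers_ofAdd_one_pow_pow Nat.prime_three (H.map rightHom)
  refine ⟨r, Nat.pos_of_ne_zero fun hr => htop ?_, hrq, hS ▸ hHS⟩
  rw [hHS, hS, hr, pow_zero, pow_one, (eq_top_iff' _).mpr mem_zpowers_ofAdd_one, comap_top]

theorem exists_eq_comap_zpowers_of_not_isCyclic {H : Subgroup (Model hq)} (hH : ¬ IsCyclic H)
    (htop : H ≠ ⊤) : ∃ r, 0 < r ∧ r ≤ q ∧ H = (zpowers ((ofAdd 1) ^ 3 ^ r)).comap rightHom :=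
  exists_eq_comap_zpowers_of_range_inl_le hq
    (not_not.mp (mt (isCyclic_of_not_range_inl_le hq) hH)) htop

def comapZpowersMulEquivProd {r : ℕ} (hr : 0 < r) (hrq : r ≤ q) :
    (zpowers ((ofAdd 1) ^ 3 ^ r)).comap (rightHom : Model hq →* _) ≃*
      QuaternionGroup 2 × Multiplicative (ZMod (3 ^ (q - r))) :=
  (comapRightHomMulEquivProd (zpowers_le.mpr (by simp [action, ijkCycle_pow_three_pow hr]))).trans
    (MulEquiv.prodCongr (MulEquiv.refl _) (mulEquivOfCyclicCardEq (by
      rw [Nat.card_zpowers, orderOf_ofAdd_one_pow_pow three_ne_zero hrq,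
        Nat.card_multiplicative_zmod])))

end Model

end Tprime

end

/-- Every non-cyclic proper subgroup of `T'_{8·3^q}` is conjugate to
`⟨b, a, w^{3^r}⟩ ≅ Q₈ × Z/3^{q-r}` for some `0 < r ≤ q`. -/
theorem noncyclic_subgroups_Tprime (q : ℕ) (hq : 1 ≤ q)
    (H : Subgroup (Tprime q)) (hH : ¬ IsCyclic H) (hHtop : H ≠ ⊤) :
    ∃ r : ℕ, 0 < r ∧ r ≤ q ∧ ∃ g : Tprime q,
      Subgroup.map (MulAut.conj g).toMonoidHom H =
        Subgroup.closure {Tprime.b q, Tprime.a q, Tprime.w q ^ (3 ^ r)} ∧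
      Nonempty (H ≃* QuaternionGroup 2 × Multiplicative (ZMod (3 ^ (q - r)))) := by
  set e := Tprime.mulEquivModel hq
  have hH' : ¬ IsCyclic (H.map e.toMonoidHom) := fun h => hH ((e.subgroupMap H).isCyclic.mpr h)
  have htop : H.map e.toMonoidHom ≠ ⊤ := by
    rwa [Ne, ← Subgroup.map_top_of_surjective e.toMonoidHom e.surjective,
      (Subgroup.map_injective (f := e.toMonoidHom) e.injective).eq_iff]
  obtain ⟨r, hr, hrq, hHr⟩ := Tprime.exists_eq_comap_zpowers_of_not_isCyclic hq hH' htop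
  refine ⟨r, hr, hrq, 1, ?_, ⟨(e.subgroupMap H).trans
    ((MulEquiv.subgroupCongr hHr).trans (Tprime.comapZpowersMulEquivProd hq hr hrq))⟩⟩
  have hconj : Subgroup.map (MulAut.conj (1 : Tprime q)).toMonoidHom H = H := by
    rw [map_one]
    exact Subgroup.map_id H
  rw [hconj]
  exact Subgroup.map_injective (f := e.toMonoidHom) e.injective
    (hHr.trans (Tprime.map_mulEquivModel_closure hq r).symm)
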